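/- With A ∈ 𝒜_k diagonal with eigenvalues a, s = (1/2)x^T A x, σ_k(a) = 1, h_k = max_i a_i σ_{k−1}(a|i), η > 0, and β = k/(2h_k) − η with β > k/2, the function ω_{α,β}(x) = ∫_1^s (1 + α t^{−β})^{1/k} dt satisfies σ_k(λ(D²ω_{α,β})) ≥ 1 + (2 α h_k η)/(k s^β) at every x ≠ 0. -/

import Mathlib

/-- The `m`-th elementary symmetric polynomial of `a : Fin n → ℝ`. -/
noncomputable def esymm {n : ℕ} (m : ℕ) (a : Fin n → ℝ) : ℝ :=
  ∑ s ∈ Finset.powersetCard m Finset.univ, ∏ i ∈ s, a i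

/-- `σ_m(a|i)`: `σ_m` of `a` with the `i`-th entry removed. -/
noncomputable def esymmRemoved {n : ℕ} (m : ℕ) (a : Fin n → ℝ) (i : Fin n) : ℝ :=
  ∑ s ∈ Finset.powersetCard m (Finset.univ.erase i), ∏ j ∈ s, a j

section AuxDet
open Matrix Finset

variable {R : Type*} [CommRing R] {n : ℕ}

lemma det_diag_add_rank_one (w u v : Fin n → R) :
    (Matrix.of fun i j => (if i = j then w i else 0) + u i * v j).det
      = ∏ i, w i + ∑ i, u i * v i * ∏ j ∈ Finset.univ.erase i, w j := by
  classical
  set f := (Matrix.detRowAlternating : (Fin n → R) [⋀^Fin n]→ₗ[R] R) with hf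
  set m : Fin n → (Fin n → R) := fun i => w i • (Pi.single i (1:R) : Fin n → R) with hm
  set m' : Fin n → (Fin n → R) := fun i => u i • v with hm'
  have hM : (Matrix.of fun i j => (if i = j then w i else 0) + u i * v j)
      = Matrix.of (fun i => m i + m' i) := by
    ext i j
    by_cases h : i = j
    · subst h; simp [hm, hm', Pi.single_apply]
    · simp [hm, hm', Pi.single_apply, h, Ne.symm h]
  have hdet : (Matrix.of fun i j => (if i = j then w i else 0) + u i * v j).det
      = f (m + m') := by rw [hM]; rfl
  have key : f (m + m') = ∑ s : Finset (Fin n), f (s.piecewise m m') :=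
    f.toMultilinearMap.map_add_univ m m'
  rw [hdet, key]
  -- the base rows
  set base : Fin n → (Fin n → R) := fun i => (Pi.single i (1:R) : Fin n → R) with hbase
  have hbase_det : f base = 1 := by
    have h1 : Matrix.of base = (1 : Matrix (Fin n) (Fin n) R) := by
      ext i j
      by_cases h : i = j
      · subst h; simp [hbase, Matrix.one_apply, Pi.single_apply]
      · simp [hbase, Matrix.one_apply, Pi.single_apply, h, Ne.symm h]
    show Matrix.det (Matrix.of base) = 1
    rw [h1, Matrix.det_one]
  -- value on s = univ
  have hFuniv : f (Finset.univ.piecewise m m') = ∏ i, w i := by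
    have h2 : Finset.univ.piecewise m m' = fun i => w i • base i := by
      funext i; simp [Finset.piecewise, hm, hbase]
    rw [h2]
    rw [show f (fun i => w i • base i) = f.toMultilinearMap (fun i => w i • base i) from rfl,
      f.toMultilinearMap.map_smul_univ]
    rw [show f.toMultilinearMap base = f base from rfl, hbase_det, smul_eq_mul, mul_one]
  -- value on s = univ.erase i₀
  have hFerase : ∀ i₀ : Fin n, f ((Finset.univ.erase i₀).piecewise m m')
      = u i₀ * v i₀ * ∏ j ∈ Finset.univ.erase i₀, w j := by
    intro i₀
    have hrows : (Finset.univ.erase i₀).piecewise m m'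
        = fun j => (if j = i₀ then u i₀ else w j) • Function.update base i₀ v j := by
      funext j
      by_cases h : j = i₀
      · subst h; simp [Finset.piecewise, hm']
      · simp [Finset.piecewise, h, hm, hbase, Function.update_of_ne h]
    have hupdate : f (Function.update base i₀ v) = v i₀ := by
      have hv : v = ∑ j, v j • (Pi.single j (1:R) : Fin n → R) := by
        funext k
        simp [Pi.single_apply, Finset.sum_ite_eq', Finset.mem_univ]
      rw [show f (Function.update base i₀ v) = f.toMultilinearMap (Function.update base i₀ v) from rfl]
      conv_lhs => rw [hv]
      have expand := f.toMultilinearMap.map_update_sum Finset.univ i₀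
        (fun j => v j • (Pi.single j (1:R) : Fin n → R)) base
      simp only [Finset.sum_fn] at expand ⊢
      rw [expand]
      have hterm : ∀ j : Fin n, f.toMultilinearMap
          (Function.update base i₀ (v j • (Pi.single j (1:R) : Fin n → R)))
          = if j = i₀ then v i₀ else 0 := by
        intro j
        rw [f.toMultilinearMap.map_update_smul]
        by_cases h : j = i₀
        · subst h
          rw [if_pos rfl]
          have hb : Function.update base j (Pi.single j (1:R) : Fin n → R) = base := by
            funext l; by_cases hl : l = j <;> simp [hbase, hl]
          rw [hb]
          rw [show f.toMultilinearMap base = f base from rfl, hbase_det]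
          simp
        · rw [if_neg h]
          have hzero : f (Function.update base i₀ (Pi.single j (1:R) : Fin n → R)) = 0 := by
            apply f.map_eq_zero_of_eq _ (i := j) (j := i₀)
            · rw [Function.update_of_ne h, Function.update_self]
            · exact h
          rw [show f.toMultilinearMap (Function.update base i₀ (Pi.single j (1:R) : Fin n → R))
            = f (Function.update base i₀ (Pi.single j (1:R) : Fin n → R)) from rfl, hzero, smul_zero]
      rw [Finset.sum_congr rfl fun j _ => hterm j]
      simp
    have hprod : (∏ j, (if j = i₀ then u i₀ else w j))
        = u i₀ * ∏ j ∈ Finset.univ.erase i₀, w j := by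
      rw [← Finset.mul_prod_erase Finset.univ _ (Finset.mem_univ i₀)]
      simp only [if_pos rfl]
      congr 1
      exact Finset.prod_congr rfl fun j hj => if_neg (Finset.ne_of_mem_erase hj)
    rw [hrows]
    rw [show f (fun j => (if j = i₀ then u i₀ else w j) • Function.update base i₀ v j)
      = f.toMultilinearMap (fun j => (if j = i₀ then u i₀ else w j) • Function.update base i₀ v j) from rfl,
      f.toMultilinearMap.map_smul_univ]
    rw [show f.toMultilinearMap (Function.update base i₀ v) = f (Function.update base i₀ v) from rfl,
      hupdate, hprod, smul_eq_mul]
    ring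
  -- value on other s is zero
  have hFzero : ∀ s : Finset (Fin n), s ≠ Finset.univ →
      (∀ i₀, s ≠ Finset.univ.erase i₀) → f (s.piecewise m m') = 0 := by
    intro s hs1 hs2
    obtain ⟨i, -, hi⟩ : ∃ i, i ∈ Finset.univ ∧ i ∉ s := by
      by_contra h
      push_neg at h
      exact hs1 (Finset.eq_univ_iff_forall.2 fun i => h i (Finset.mem_univ i))
    obtain ⟨j, hji, hj⟩ : ∃ j, j ≠ i ∧ j ∉ s := by
      by_contra h
      push_neg at h
      apply hs2 i
      apply Finset.ext
      intro l
      simp only [Finset.mem_erase, Finset.mem_univ, and_true]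
      constructor
      · intro hl he; exact hi (he ▸ hl)
      · intro hl; exact h l hl
    set rows := s.piecewise m m' with hrows
    have hri : rows i = u i • v := by simp [hrows, Finset.piecewise, hi, hm']
    have hrj : rows j = u j • v := by simp [hrows, Finset.piecewise, hj, hm']
    have e1 : rows = Function.update rows i (u i • v) := by
      funext l; by_cases hl : l = i
      · subst hl; rw [Function.update_self, hri]
      · rw [Function.update_of_ne hl]
    rw [e1]
    rw [show f (Function.update rows i (u i • v))
      = f.toMultilinearMap (Function.update rows i (u i • v)) from rfl,
      f.toMultilinearMap.map_update_smul]
    have e2 : Function.update rows i v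
        = Function.update (Function.update rows i v) j (u j • v) := by
      funext l; by_cases hl : l = j
      · subst hl; rw [Function.update_self, Function.update_of_ne hji, hrj]
      · rw [Function.update_of_ne hl]
    rw [show f.toMultilinearMap (Function.update rows i v)
      = f (Function.update rows i v) from rfl, e2]
    rw [show f (Function.update (Function.update rows i v) j (u j • v))
      = f.toMultilinearMap (Function.update (Function.update rows i v) j (u j • v)) from rfl,
      f.toMultilinearMap.map_update_smul]
    have hzero : f (Function.update (Function.update rows i v) j v) = 0 := by
      apply f.map_eq_zero_of_eq _ (i := i) (j := j) _ (fun h => hji h.symm)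
      rw [Function.update_self, Function.update_of_ne (fun h => hji h.symm), Function.update_self]
    rw [show f.toMultilinearMap (Function.update (Function.update rows i v) j v)
      = f (Function.update (Function.update rows i v) j v) from rfl, hzero, smul_zero, smul_zero]
  -- assemble
  classical
  set T : Finset (Finset (Fin n)) :=
    insert Finset.univ (Finset.univ.image (fun i : Fin n => Finset.univ.erase i)) with hT
  have hsub : ∑ s : Finset (Fin n), f (s.piecewise m m') = ∑ s ∈ T, f (s.piecewise m m') := by
    symm
    apply Finset.sum_subset (Finset.subset_univ T)
    intro s _ hsT
    apply hFzero
    · intro h; exact hsT (h ▸ Finset.mem_insert_self _ _)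
    · intro i₀ h
      exact hsT (h ▸ Finset.mem_insert_of_mem (Finset.mem_image_of_mem _ (Finset.mem_univ i₀)))
  rw [hsub]
  have huniv_notmem : Finset.univ ∉ Finset.univ.image (fun i : Fin n => Finset.univ.erase i) := by
    intro h
    obtain ⟨i, -, hi⟩ := Finset.mem_image.1 h
    have : i ∈ Finset.univ.erase i := hi.symm ▸ Finset.mem_univ i
    exact (Finset.notMem_erase i _) this
  rw [hT, Finset.sum_insert huniv_notmem, hFuniv]
  congr 1
  rw [Finset.sum_image ?_]
  · exact Finset.sum_congr rfl fun i _ => hFerase i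
  · intro i _ j _ hij
    by_contra h
    have h1 : i ∈ Finset.univ.erase j := Finset.mem_erase.2 ⟨h, Finset.mem_univ i⟩
    rw [← show Finset.univ.erase i = Finset.univ.erase j from hij] at h1
    exact Finset.notMem_erase i _ h1

end AuxDet

section AuxAlg
open Polynomial Matrix Finset

variable {R : Type*} [CommRing R] {n : ℕ}

lemma coeff_prod_X_sub_C (t : Finset (Fin n)) (r : Fin n → R) (m : ℕ) (hm : m ≤ t.card) :
    (∏ i ∈ t, (X - C (r i))).coeff (t.card - m)
      = (-1) ^ m * ∑ S ∈ Finset.powersetCard m t, ∏ i ∈ S, r i := by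
  have h1 : (∏ i ∈ t, (X - C (r i)))
      = (t.val.map (fun i => X + C ((fun i => -r i) i))).prod := by
    rw [Finset.prod_eq_multiset_prod]
    congr 1
    apply Multiset.map_congr rfl
    intro i _
    simp [sub_eq_add_neg]
  have hcard : Multiset.card t.val = t.card := rfl
  have hle : t.card - m ≤ Multiset.card t.val := by rw [hcard]; omega
  rw [h1, Multiset.prod_X_add_C_coeff' _ _ hle]
  rw [hcard, Nat.sub_sub_self hm]
  have h2 : (t.val.map fun i => -r i) = Multiset.map Neg.neg (t.val.map r) := by
    rw [Multiset.map_map]; rfl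
  rw [h2, Multiset.esymm_neg, Finset.esymm_map_val]

lemma charpoly_diag_add_rank_one (d u v : Fin n → R) :
    (Matrix.of fun i j => ((if i = j then d i else 0) + u i * v j) :
        Matrix (Fin n) (Fin n) R).charpoly
      = ∏ i, (X - C (d i))
        + ∑ i, (- C (u i)) * C (v i) * ∏ j ∈ Finset.univ.erase i, (X - C (d j)) := by
  have hcm : charmatrix (Matrix.of fun i j => ((if i = j then d i else 0) + u i * v j) :
        Matrix (Fin n) (Fin n) R)
      = Matrix.of fun i j => (if i = j then (X - C (d i)) else 0) + (- C (u i)) * C (v j) := by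
    apply Matrix.ext
    intro i j
    by_cases h : i = j
    · subst h
      simp [charmatrix_apply, _root_.map_add, _root_.map_mul]
      ring
    · simp [charmatrix_apply, Matrix.diagonal_apply_ne _ h, h, _root_.map_add, _root_.map_mul]
  show (charmatrix _).det = _
  rw [hcm, det_diag_add_rank_one]

lemma charpoly_conj_eq {P Q B : Matrix (Fin n) (Fin n) R} (hPQ : P * Q = 1) (hQP : Q * P = 1) :
    (P * B * Q).charpoly = B.charpoly := by
  have hmap : charmatrix (P * B * Q)
      = P.map C * charmatrix B * Q.map C := by
    unfold charmatrix
    simp only [RingHom.mapMatrix_apply]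
    rw [mul_sub, sub_mul]
    congr 1
    · -- scalar X = P.map C * scalar X * Q.map C
      have hc : P.map C * Matrix.scalar (Fin n) (X : R[X])
          = Matrix.scalar (Fin n) (X : R[X]) * P.map C :=
        (Matrix.scalar_commute _ (fun r' => Commute.all _ _) _).symm
      rw [hc, Matrix.mul_assoc, ← Matrix.map_mul, hPQ]
      simp [Matrix.map_one]
    · rw [← Matrix.map_mul, ← Matrix.map_mul]
  show (charmatrix _).det = _
  rw [hmap, Matrix.det_mul, Matrix.det_mul]
  have : (P.map C).det * (charmatrix B).det * (Q.map C).det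
      = ((P.map C).det * (Q.map C).det) * (charmatrix B).det := by ring
  rw [this, ← Matrix.det_mul, ← Matrix.map_mul, hPQ]
  simp [Matrix.charpoly]

lemma charpoly_eq_prod_eigenvalues (M : Matrix (Fin n) (Fin n) ℝ) (hM : M.IsHermitian) :
    M.charpoly = ∏ i, (X - C (hM.eigenvalues i)) := by
  have hspec := hM.spectral_theorem
  have hdiag : Matrix.diagonal (RCLike.ofReal ∘ hM.eigenvalues)
      = Matrix.diagonal hM.eigenvalues := by
    have hco : RCLike.ofReal ∘ hM.eigenvalues = hM.eigenvalues := by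
      funext i
      simp [RCLike.ofReal_real_eq_id]
    rw [hco]
  rw [hdiag] at hspec
  set U := (hM.eigenvectorUnitary : Matrix (Fin n) (Fin n) ℝ)
  have h1 : U * star U = 1 := hM.eigenvectorUnitary.2.2
  have h2 : star U * U = 1 := hM.eigenvectorUnitary.2.1
  conv_lhs => rw [hspec, Unitary.conjStarAlgAut_apply]
  rw [charpoly_conj_eq h1 h2]
  have hcm : charmatrix (Matrix.diagonal hM.eigenvalues)
      = Matrix.diagonal fun i => X - C (hM.eigenvalues i) := by
    apply Matrix.ext
    intro i j
    by_cases h : i = j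
    · subst h; simp [charmatrix_apply]
    · simp [charmatrix_apply, Matrix.diagonal_apply_ne _ h, h]
  show (charmatrix _).det = _
  rw [hcm, Matrix.det_diagonal]

lemma esymm_eigen_of_diag_rank_one {n k : ℕ} (hk1 : 1 ≤ k) (hkn : k ≤ n)
    (d u v : Fin n → ℝ) (M : Matrix (Fin n) (Fin n) ℝ)
    (hMdef : M = Matrix.of fun i j => (if i = j then d i else 0) + u i * v j)
    (hM : M.IsHermitian) :
    esymm k hM.eigenvalues = esymm k d + ∑ i, u i * v i * esymmRemoved (k-1) d i := by
  classical
  have h1 := charpoly_eq_prod_eigenvalues M hM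
  have h2 : M.charpoly = ∏ i, (X - C (d i))
      + ∑ i, (- C (u i)) * C (v i) * ∏ j ∈ Finset.univ.erase i, (X - C (d j)) := by
    conv_lhs => rw [hMdef]
    exact charpoly_diag_add_rank_one d u v
  have hcoeffprod : ∀ r : Fin n → ℝ, (∏ i, (X - C (r i))).coeff (n - k)
      = (-1)^k * esymm k r := by
    intro r
    have h := coeff_prod_X_sub_C (Finset.univ : Finset (Fin n)) r k
      (by rw [Finset.card_univ, Fintype.card_fin]; exact hkn)
    rw [Finset.card_univ, Fintype.card_fin] at h
    unfold esymm
    exact h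
  have ecard : ∀ i : Fin n, (Finset.univ.erase i).card = n - 1 := by
    intro i
    rw [Finset.card_erase_of_mem (Finset.mem_univ i), Finset.card_univ, Fintype.card_fin]
  have e3 : ∀ i : Fin n, (∏ j ∈ Finset.univ.erase i, (X - C (d j))).coeff (n - k)
      = (-1)^(k-1) * esymmRemoved (k-1) d i := by
    intro i
    have h := coeff_prod_X_sub_C (Finset.univ.erase i) d (k-1) (by rw [ecard i]; omega)
    rw [ecard i] at h
    have hidx : n - 1 - (k - 1) = n - k := by omega
    rw [hidx] at h
    unfold esymmRemoved
    exact h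
  have key := congrArg (fun p => p.coeff (n - k)) (h1.symm.trans h2)
  simp only [Polynomial.coeff_add, Polynomial.finset_sum_coeff] at key
  rw [hcoeffprod hM.eigenvalues, hcoeffprod d] at key
  have eS : ∀ i : Fin n, ((- C (u i)) * C (v i) * ∏ j ∈ Finset.univ.erase i, (X - C (d j))).coeff (n - k)
      = (-(u i * v i)) * ((-1)^(k-1) * esymmRemoved (k-1) d i) := by
    intro i
    have hC : (- C (u i)) * C (v i) = C (-(u i * v i)) := by
      rw [map_neg, _root_.map_mul C (u i) (v i), neg_mul]
    rw [hC, Polynomial.coeff_C_mul, e3 i]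
  rw [Finset.sum_congr rfl fun i _ => eS i] at key
  set ε := ((-1 : ℝ))^(k-1) with hε
  have hknat : k = (k - 1) + 1 := by omega
  have hpow : ((-1 : ℝ))^k = -ε := by rw [hknat, pow_succ]; ring
  have hsum : ∑ i : Fin n, (-(u i * v i)) * (ε * esymmRemoved (k-1) d i)
      = (-ε) * ∑ i : Fin n, u i * v i * esymmRemoved (k-1) d i := by
    rw [Finset.mul_sum]
    exact Finset.sum_congr rfl fun i _ => by ring
  rw [hpow, hsum] at key
  have hεne : (-ε) ≠ 0 := by
    simp [hε]
  apply mul_left_cancel₀ hεne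
  rw [mul_add]
  exact key

end AuxAlg

section AuxAna
open Filter

lemma hessian_entries {n : ℕ} (k : ℕ) (a : Fin n → ℝ) (α β : ℝ)
    (hα : 0 < α)
    (s : EuclideanSpace ℝ (Fin n) → ℝ)
    (hs : ∀ x, s x = (1 / 2) * ∑ i, a i * x i ^ 2)
    (ω : EuclideanSpace ℝ (Fin n) → ℝ)
    (hω : ∀ x, ω x = ∫ t in (1 : ℝ)..(s x), (1 + α * t ^ (-β)) ^ (1 / (k : ℝ)))
    (x : EuclideanSpace ℝ (Fin n)) (hsx : 0 < s x) (i j : Fin n) :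
    fderiv ℝ (fun y => fderiv ℝ ω y (EuclideanSpace.single j 1)) x (EuclideanSpace.single i 1)
      = (if i = j then ((1 + α * (s x) ^ (-β)) ^ (1 / (k : ℝ))) * a i else 0)
        + (α * (-β * (s x) ^ (-β - 1)) * (1 / (k : ℝ))
            * (1 + α * (s x) ^ (-β)) ^ (1 / (k : ℝ) - 1)) * (a i * x i) * (a j * x j) := by
  classical
  set f : ℝ → ℝ := fun t => (1 + α * t ^ (-β)) ^ (1 / (k : ℝ)) with hfdef
  set f' : ℝ → ℝ := fun t =>
    α * (-β * t ^ (-β - 1)) * (1 / (k : ℝ)) * (1 + α * t ^ (-β)) ^ (1 / (k : ℝ) - 1) with hf'def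
  have hpos : ∀ t : ℝ, 0 < t → 0 < 1 + α * t ^ (-β) := by
    intro t ht
    have : 0 < t ^ (-β) := Real.rpow_pos_of_pos ht _
    nlinarith
  have hfderiv : ∀ t : ℝ, 0 < t → HasDerivAt f (f' t) t := by
    intro t ht
    have h1 : HasDerivAt (fun u : ℝ => u ^ (-β)) (-β * t ^ (-β - 1)) t :=
      Real.hasDerivAt_rpow_const (Or.inl ht.ne')
    have h2 : HasDerivAt (fun u : ℝ => 1 + α * u ^ (-β)) (α * (-β * t ^ (-β - 1))) t :=
      (h1.const_mul α).const_add 1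
    exact h2.rpow_const (Or.inl (hpos t ht).ne')
  set L : EuclideanSpace ℝ (Fin n) → (EuclideanSpace ℝ (Fin n) →L[ℝ] ℝ) :=
    fun y => ∑ i, (a i * y i) • (EuclideanSpace.proj i : EuclideanSpace ℝ (Fin n) →L[ℝ] ℝ)
    with hLdef
  have hL : ∀ y : EuclideanSpace ℝ (Fin n), HasFDerivAt s (L y) y := by
    intro y
    have hs' : s = fun y : EuclideanSpace ℝ (Fin n) => ∑ i, (a i / 2) * (y i * y i) := by
      funext z
      rw [hs z, Finset.mul_sum]
      exact Finset.sum_congr rfl fun i _ => by ring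
    rw [hs', hLdef]
    apply HasFDerivAt.fun_sum
    intro i _
    have hproj : HasFDerivAt (fun z : EuclideanSpace ℝ (Fin n) => z i)
        (EuclideanSpace.proj i : EuclideanSpace ℝ (Fin n) →L[ℝ] ℝ) y :=
      (EuclideanSpace.proj i : EuclideanSpace ℝ (Fin n) →L[ℝ] ℝ).hasFDerivAt
    have hmul := hproj.mul hproj
    have h2 := hmul.const_mul (a i / 2)
    have heq : (a i / 2) • (y i • (EuclideanSpace.proj i : EuclideanSpace ℝ (Fin n) →L[ℝ] ℝ)
          + y i • (EuclideanSpace.proj i : EuclideanSpace ℝ (Fin n) →L[ℝ] ℝ))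
        = (a i * y i) • (EuclideanSpace.proj i : EuclideanSpace ℝ (Fin n) →L[ℝ] ℝ) := by
      ext z
      simp only [ContinuousLinearMap.add_apply, ContinuousLinearMap.smul_apply, smul_eq_mul]
      ring
    rw [← heq]
    exact h2
  have hscont : Continuous s := continuous_iff_continuousAt.2 fun y => (hL y).continuousAt
  have hU : IsOpen {y : EuclideanSpace ℝ (Fin n) | 0 < s y} :=
    isOpen_lt continuous_const hscont
  have hF : ∀ u : ℝ, 0 < u → HasDerivAt (fun u => ∫ t in (1 : ℝ)..u, f t) (f u) u := by
    intro u hu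
    have hfc : ContinuousOn f (Set.Ioi 0) :=
      fun t ht => ((hfderiv t ht).continuousAt).continuousWithinAt
    have hsub : Set.uIcc (1 : ℝ) u ⊆ Set.Ioi 0 := by
      intro t ht
      rw [Set.mem_uIcc] at ht
      rcases ht with ⟨h, -⟩ | ⟨h, -⟩ <;> simp only [Set.mem_Ioi] <;> linarith
    have hint : IntervalIntegrable f MeasureTheory.volume 1 u :=
      (hfc.mono hsub).intervalIntegrable
    have hmeas := hfc.stronglyMeasurableAtFilter (μ := MeasureTheory.volume) isOpen_Ioi u hu
    exact intervalIntegral.integral_hasDerivAt_right hint hmeas (hfderiv u hu).continuousAt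
  have hωfderiv : ∀ y : EuclideanSpace ℝ (Fin n), 0 < s y →
      HasFDerivAt ω (f (s y) • L y) y := by
    intro y hy
    have hωeq : ω = (fun u => ∫ t in (1 : ℝ)..u, f t) ∘ s := funext fun z => hω z
    rw [hωeq]
    exact (hF (s y) hy).comp_hasFDerivAt y (hL y)
  have hLeval : ∀ (y : EuclideanSpace ℝ (Fin n)) (i₀ : Fin n),
      L y (EuclideanSpace.single i₀ 1) = a i₀ * y i₀ := by
    intro y i₀
    rw [hLdef]
    simp only [ContinuousLinearMap.sum_apply, ContinuousLinearMap.smul_apply,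
      PiLp.proj_apply, EuclideanSpace.single_apply, smul_eq_mul, mul_ite, mul_one, mul_zero]
    rw [Finset.sum_ite_eq' Finset.univ i₀ (fun i => a i * y i)]
    simp
  have hgrad : ∀ y : EuclideanSpace ℝ (Fin n), 0 < s y →
      fderiv ℝ ω y (EuclideanSpace.single j 1) = f (s y) * (a j * y j) := by
    intro y hy
    rw [(hωfderiv y hy).fderiv]
    rw [ContinuousLinearMap.smul_apply, hLeval y j, smul_eq_mul]
  have hev : (fun y => fderiv ℝ ω y (EuclideanSpace.single j 1))
      =ᶠ[nhds x] (fun y => f (s y) * (a j * y j)) := by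
    filter_upwards [hU.mem_nhds (show x ∈ {y : EuclideanSpace ℝ (Fin n) | 0 < s y} from hsx)]
      with y hy using hgrad y hy
  rw [hev.fderiv_eq]
  have h1 : HasFDerivAt (fun y : EuclideanSpace ℝ (Fin n) => f (s y)) (f' (s x) • L x) x :=
    (hfderiv (s x) hsx).comp_hasFDerivAt x (hL x)
  have h2 : HasFDerivAt (fun y : EuclideanSpace ℝ (Fin n) => a j * y j)
      ((a j) • (EuclideanSpace.proj j : EuclideanSpace ℝ (Fin n) →L[ℝ] ℝ)) x :=
    ((EuclideanSpace.proj j : EuclideanSpace ℝ (Fin n) →L[ℝ] ℝ).hasFDerivAt).const_mul (a j)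
  have hφ := h1.fun_mul h2
  rw [hφ.fderiv]
  simp only [ContinuousLinearMap.add_apply, ContinuousLinearMap.smul_apply]
  rw [hLeval x i, PiLp.proj_apply, EuclideanSpace.single_apply]
  simp only [smul_eq_mul]
  by_cases h : i = j
  · subst h
    simp only [hfdef, hf'def, eq_self_iff_true, if_true]
    ring
  · rw [if_neg h, if_neg (fun hh => h hh.symm)]
    simp only [hfdef, hf'def]
    ring

end AuxAna

lemma final_id (α H η β kR Q : ℝ) (hk : kR ≠ 0) (hQ : Q ≠ 0)
    (hβH : 2*H*β = kR - 2*H*η) :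
    1 + α * Q⁻¹ - (2*α*β*H/kR) * Q⁻¹ = 1 + 2*α*H*η/(kR*Q) := by
  field_simp
  linear_combination (-α) * hβH

/-- With `A = diag(a)` having `σ_k(a) = 1`, `s = ½ xᵀAx`,
`h_k = maxᵢ aᵢ σ_{k−1}(a|i)`, `η > 0`, `β = k/(2h_k) − η` with `β > k/2`, the function
`ω_{α,β}(x) = ∫_1^s (1 + α t^{−β})^{1/k} dt` satisfies
`σ_k(λ(D²ω_{α,β})) ≥ 1 + 2αh_kη/(k s^β)` at every `x ≠ 0`. -/
theorem stmt5 {n k : ℕ} (hn : 3 ≤ n) (hk : 2 ≤ k) (hkn : k ≤ n - 1)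
    (a : Fin n → ℝ) (ha : ∀ i, 0 < a i) (hσ : esymm k a = 1)
    (H : ℝ) (hH : IsGreatest (Set.range fun i => a i * esymmRemoved (k - 1) a i) H)
    (η α β : ℝ) (hη : 0 < η) (hα : 0 < α)
    (hβ : β = (k : ℝ) / (2 * H) - η) (hβ2 : (k : ℝ) / 2 < β)
    (s : EuclideanSpace ℝ (Fin n) → ℝ)
    (hs : ∀ x, s x = (1 / 2) * ∑ i, a i * x i ^ 2)
    (ω : EuclideanSpace ℝ (Fin n) → ℝ)
    (hω : ∀ x, ω x = ∫ t in (1 : ℝ)..(s x), (1 + α * t ^ (-β)) ^ (1 / (k : ℝ)))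
    (Hess : EuclideanSpace ℝ (Fin n) → Matrix (Fin n) (Fin n) ℝ)
    (hHess : ∀ x i j, Hess x i j
      = fderiv ℝ (fun y => fderiv ℝ ω y (EuclideanSpace.single j 1)) x
          (EuclideanSpace.single i 1))
    (hHerm : ∀ x : EuclideanSpace ℝ (Fin n), x ≠ 0 → (Hess x).IsHermitian) :
    ∀ (x : EuclideanSpace ℝ (Fin n)) (hx : x ≠ 0),
      1 + 2 * α * H * η / ((k : ℝ) * (s x) ^ β)
        ≤ esymm k (hHerm x hx).eigenvalues := by
  classical
  intro x hx
  have hk0 : (0:ℝ) < (k:ℝ) := by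
    have : 0 < k := by omega
    exact_mod_cast this
  have hkne : (k:ℝ) ≠ 0 := hk0.ne'
  -- s x > 0
  have hsx : 0 < s x := by
    rw [hs x]
    obtain ⟨i₀, hi₀⟩ : ∃ i, x i ≠ 0 := by
      by_contra h
      push_neg at h
      exact hx (PiLp.ext fun i => h i)
    have hpos : 0 < a i₀ * x i₀ ^ 2 :=
      mul_pos (ha i₀) (lt_of_le_of_ne (sq_nonneg _) (Ne.symm (pow_ne_zero 2 hi₀)))
    have hsum : 0 < ∑ i, a i * x i ^ 2 := by
      apply Finset.sum_pos' (fun i _ => mul_nonneg (ha i).le (sq_nonneg _))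
      exact ⟨i₀, Finset.mem_univ i₀, hpos⟩
    linarith
  -- H facts
  have hbound : ∀ i, a i * esymmRemoved (k-1) a i ≤ H := fun i => hH.2 ⟨i, rfl⟩
  have hHpos : 0 < H := by
    obtain ⟨i₀, hi₀⟩ := hH.1
    rw [← hi₀]
    apply mul_pos (ha i₀)
    unfold esymmRemoved
    apply Finset.sum_pos
    · intro S hS
      exact Finset.prod_pos fun j _ => ha j
    · rw [Finset.powersetCard_nonempty, Finset.card_erase_of_mem (Finset.mem_univ i₀),
        Finset.card_univ, Fintype.card_fin]
      omega
  have hβpos : 0 < β := by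
    have : (0:ℝ) < (k:ℝ)/2 := by positivity
    linarith
  -- notation
  set S : ℝ := s x with hSdef
  set P : ℝ := 1 + α * S ^ (-β) with hPdef
  have hSrpos : 0 < S ^ (-β) := Real.rpow_pos_of_pos hsx _
  have hPpos : 0 < P := by rw [hPdef]; nlinarith
  set F : ℝ := P ^ (1/(k:ℝ)) with hFdef
  set c : ℝ := α * (-β * S ^ (-β - 1)) * (1 / (k : ℝ)) * P ^ (1 / (k : ℝ) - 1) with hcdef
  set d : Fin n → ℝ := fun i => F * a i with hddef
  set u : Fin n → ℝ := fun i => c * (a i * x i) with hudef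
  set v : Fin n → ℝ := fun i => a i * x i with hvdef
  -- Hessian entries
  have hMeq : Hess x = Matrix.of fun i j => (if i = j then d i else 0) + u i * v j := by
    apply Matrix.ext
    intro i j
    rw [hHess x i j, hessian_entries k a α β hα s hs ω hω x hsx i j]
    simp only [Matrix.of_apply, hddef, hudef, hvdef, hFdef, hPdef, hcdef]
    all_goals ring
  have halg := esymm_eigen_of_diag_rank_one (n := n) (k := k) (by omega) (by omega)
    d u v (Hess x) hMeq (hHerm x hx)
  -- scaling
  have hesymm_scale : ∀ (m : ℕ) (r : ℝ) (b : Fin n → ℝ),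
      esymm m (fun i => r * b i) = r ^ m * esymm m b := by
    intro m r b
    unfold esymm
    rw [Finset.mul_sum]
    apply Finset.sum_congr rfl
    intro t ht
    rw [Finset.prod_mul_distrib, Finset.prod_const, (Finset.mem_powersetCard.1 ht).2]
  have hesymmR_scale : ∀ (m : ℕ) (r : ℝ) (b : Fin n → ℝ) (i : Fin n),
      esymmRemoved m (fun i => r * b i) i = r ^ m * esymmRemoved m b i := by
    intro m r b i
    unfold esymmRemoved
    rw [Finset.mul_sum]
    apply Finset.sum_congr rfl
    intro t ht
    rw [Finset.prod_mul_distrib, Finset.prod_const, (Finset.mem_powersetCard.1 ht).2]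
  have hdk : esymm k d = F ^ k := by
    rw [hddef, hesymm_scale k F a, hσ, mul_one]
  have hdk1 : ∀ i, esymmRemoved (k-1) d i = F ^ (k-1) * esymmRemoved (k-1) a i := by
    intro i
    rw [hddef, hesymmR_scale]
  -- rpow arithmetic
  have hFk : F ^ k = P := by
    rw [hFdef, ← Real.rpow_natCast (P ^ (1/(k:ℝ))) k, ← Real.rpow_mul hPpos.le]
    rw [one_div, inv_mul_cancel₀ hkne, Real.rpow_one]
  have hFk1 : F ^ (k-1) = P ^ ((1/(k:ℝ)) * ((k:ℝ) - 1)) := by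
    rw [hFdef, ← Real.rpow_natCast (P ^ (1/(k:ℝ))) (k-1), ← Real.rpow_mul hPpos.le]
    congr 1
    rw [Nat.cast_sub (by omega : 1 ≤ k)]
    norm_num
  have hcF : c * F ^ (k-1) = -(α * β / (k:ℝ)) * S ^ (-β - 1) := by
    rw [hFk1, hcdef]
    have hPP : P ^ (1/(k:ℝ) - 1) * P ^ ((1/(k:ℝ)) * ((k:ℝ) - 1)) = 1 := by
      rw [← Real.rpow_add hPpos]
      have he : 1/(k:ℝ) - 1 + (1/(k:ℝ)) * ((k:ℝ) - 1) = 0 := by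
        field_simp
        ring
      rw [he, Real.rpow_zero]
    calc α * (-β * S ^ (-β - 1)) * (1 / (k:ℝ)) * P ^ (1/(k:ℝ) - 1)
          * P ^ ((1/(k:ℝ)) * ((k:ℝ) - 1))
        = α * (-β * S ^ (-β - 1)) * (1 / (k:ℝ))
          * (P ^ (1/(k:ℝ) - 1) * P ^ ((1/(k:ℝ)) * ((k:ℝ) - 1))) := by ring
      _ = -(α * β / (k:ℝ)) * S ^ (-β - 1) := by rw [hPP]; ring
  -- the quadratic sum
  set T : ℝ := ∑ i, (a i * x i)^2 * esymmRemoved (k-1) a i with hTdef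
  have hsum_eq : ∑ i, u i * v i * esymmRemoved (k-1) d i = (c * F ^ (k-1)) * T := by
    rw [hTdef, Finset.mul_sum]
    apply Finset.sum_congr rfl
    intro i _
    rw [hdk1 i, hudef, hvdef]
    ring
  have hTle : T ≤ 2 * S * H := by
    have h1 : T ≤ ∑ i, (a i * x i ^ 2) * H := by
      rw [hTdef]
      apply Finset.sum_le_sum
      intro i _
      have hterm : (a i * x i)^2 * esymmRemoved (k-1) a i
          = (a i * x i ^ 2) * (a i * esymmRemoved (k-1) a i) := by ring
      rw [hterm]
      exact mul_le_mul_of_nonneg_left (hbound i) (mul_nonneg (ha i).le (sq_nonneg _))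
    have h2 : ∑ i, (a i * x i ^ 2) * H = (2 * S) * H := by
      rw [← Finset.sum_mul]
      congr 1
      have := hs x
      rw [← hSdef] at this
      linarith
    linarith
  -- putting it together
  have hkey : esymm k (hHerm x hx).eigenvalues
      = P + (-(α * β / (k:ℝ)) * S ^ (-β - 1)) * T := by
    rw [halg, hdk, hFk, hsum_eq, hcF]
  have hcoef_nonpos : -(α * β / (k:ℝ)) * S ^ (-β - 1) ≤ 0 := by
    have h1 : 0 < S ^ (-β - 1) := Real.rpow_pos_of_pos hsx _
    have h2 : 0 < α * β / (k:ℝ) := by positivity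
    nlinarith
  have hineq : (-(α * β / (k:ℝ)) * S ^ (-β - 1)) * (2 * S * H)
      ≤ (-(α * β / (k:ℝ)) * S ^ (-β - 1)) * T :=
    mul_le_mul_of_nonpos_left hTle hcoef_nonpos
  have hfinal : P + (-(α * β / (k:ℝ)) * S ^ (-β - 1)) * (2 * S * H)
      = 1 + 2 * α * H * η / ((k : ℝ) * S ^ β) := by
    have hS1 : S ^ (-β - 1) * S = S ^ (-β) := by
      rw [← Real.rpow_add_one hsx.ne' (-β - 1)]
      norm_num
    have hSneg : S ^ (-β) = (S ^ β)⁻¹ := Real.rpow_neg hsx.le β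
    have hQpos : 0 < S ^ β := Real.rpow_pos_of_pos hsx _
    have hHne : H ≠ 0 := hHpos.ne'
    have hβH : 2 * H * β = (k:ℝ) - 2 * H * η := by
      rw [hβ]
      field_simp
    have hexp : P + (-(α * β / (k:ℝ)) * S ^ (-β - 1)) * (2 * S * H)
        = 1 + α * S ^ (-β) - (2 * α * β * H / (k:ℝ)) * (S ^ (-β - 1) * S) := by
      rw [hPdef]; ring
    rw [hexp, hS1, hSneg]
    exact final_id α H η β (k:ℝ) (S ^ β) hkne hQpos.ne' hβH
  calc 1 + 2 * α * H * η / ((k : ℝ) * S ^ β)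
      = P + (-(α * β / (k:ℝ)) * S ^ (-β - 1)) * (2 * S * H) := hfinal.symm
    _ ≤ P + (-(α * β / (k:ℝ)) * S ^ (-β - 1)) * T := by linarith
    _ = esymm k (hHerm x hx).eigenvalues := hkey.symm
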